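/- Let B be a 3×3 real matrix whose first column is zero and whose second and third columns are v and t·v respectively, with v = (x, y, z) ≠ 0. Then B² = 0 if and only if y + tz = 0; and in that case ker(B) is spanned by (0, -t, 1) and (1, 0, 0). -/
import Mathlib

open Matrix

theorem stmt_17 (x y z t : ℝ) (hv : ![x, y, z] ≠ 0)
    (B : Matrix (Fin 3) (Fin 3) ℝ)
    (hB : B = Matrix.of fun i j => ![(0 : ℝ), 1, t] j * ![x, y, z] i) :
    (B ^ 2 = 0 ↔ y + t * z = 0) ∧
      (y + t * z = 0 →
        LinearMap.ker B.mulVecLin =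
          Submodule.span ℝ {![0, -t, 1], ![1, 0, 0]}) := by
  have hv' : ∃ i, ![x, y, z] i ≠ 0 := by
    by_contra h
    push_neg at h
    apply hv
    funext i
    exact h i
  obtain ⟨i0, hi0⟩ := hv'
  subst hB
  constructor
  · constructor
    · intro h
      have h1 := congrFun (congrFun h i0) 1
      simp [pow_two, Matrix.mul_apply, Fin.sum_univ_three] at h1
      have h2 : ![x,y,z] i0 * (y + t * z) = 0 := by linarith
      rcases mul_eq_zero.mp h2 with h' | h'
      · exact absurd h' hi0
      · exact h'
    · intro h
      ext i j
      simp [pow_two, Matrix.mul_apply, Fin.sum_univ_three]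
      linear_combination (![x,y,z] i * ![0,1,t] j) * h
  · intro h
    apply le_antisymm
    · intro u hu
      simp only [LinearMap.mem_ker, Matrix.mulVecLin_apply] at hu
      have hu0 := congrFun hu i0
      simp [Matrix.mulVec, dotProduct, Fin.sum_univ_three] at hu0
      have hkey : u 1 + t * u 2 = 0 := by
        rcases mul_eq_zero.mp (by linarith [hu0] : ![x,y,z] i0 * (u 1 + t * u 2) = 0) with h' | h'
        · exact absurd h' hi0
        · exact h'
      have : u = u 0 • ![1, 0, 0] + u 2 • ![0, -t, 1] := by
        funext j
        fin_cases j <;> (simp; try linarith)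
      rw [this]
      exact Submodule.add_mem _
        (Submodule.smul_mem _ _ (Submodule.subset_span (by simp)))
        (Submodule.smul_mem _ _ (Submodule.subset_span (by simp)))
    · rw [Submodule.span_le]
      intro u hu
      simp only [Set.mem_insert_iff, Set.mem_singleton_iff] at hu
      rcases hu with rfl | rfl <;>
      · simp only [SetLike.mem_coe, LinearMap.mem_ker, Matrix.mulVecLin_apply]
        funext j
        simp [Matrix.mulVec, dotProduct, Fin.sum_univ_three]
        try ring
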